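/- arXiv:cond-mat/0602453 — 3 statements merged into one kernel-verified Lean document; each statement's English description precedes it below -/
import Mathlib

section
/- For every integer n ≥ 1 and every k ∈ {1,...,n}, the function K ↦ u_k(K) = cosh((n+1-2k)K)/cosh((n+1)K) is strictly decreasing on [0,∞), satisfies u_k(0) = 1, and tends to 0 as K → ∞. -/
open Real Filter

/-- Key inequality for the derivative sign. -/
lemma key_ineq (a b x : ℝ) (hab : |a| < b) (hx : 0 < x) :
    a * Real.sinh (a * x) * Real.cosh (b * x) <
      b * Real.sinh (b * x) * Real.cosh (a * x) := by
  set c := |a| with hc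
  have hc0 : 0 ≤ c := abs_nonneg a
  have h1 : a * Real.sinh (a * x) = c * Real.sinh (c * x) := by
    rcases abs_cases a with ⟨h, _⟩ | ⟨h, _⟩
    · rw [hc, h]
    · rw [hc, h]; simp [neg_mul, Real.sinh_neg]
  have h2 : Real.cosh (a * x) = Real.cosh (c * x) := by
    rcases abs_cases a with ⟨h, _⟩ | ⟨h, _⟩
    · rw [hc, h]
    · rw [hc, h]; simp [neg_mul, Real.cosh_neg]
  rw [h1, h2]
  have hS : 0 < Real.sinh ((b + c) * x) := Real.sinh_pos_iff.2 (by nlinarith)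
  have hT : 0 < Real.sinh ((b - c) * x) := Real.sinh_pos_iff.2 (by nlinarith)
  have eS : Real.sinh ((b + c) * x)
      = Real.sinh (b * x) * Real.cosh (c * x) + Real.cosh (b * x) * Real.sinh (c * x) := by
    rw [add_mul, Real.sinh_add]
  have eT : Real.sinh ((b - c) * x)
      = Real.sinh (b * x) * Real.cosh (c * x) - Real.cosh (b * x) * Real.sinh (c * x) := by
    rw [sub_mul, Real.sinh_sub]
  nlinarith [mul_pos (sub_pos.2 hab) hS, mul_nonneg hc0 hT.le,
    mul_pos (lt_of_le_of_lt hc0 hab) hT]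

lemma uNL_hasDerivAt (a b x : ℝ) :
    HasDerivAt (fun K : ℝ => Real.cosh (a * K) / Real.cosh (b * K))
      ((Real.sinh (a * x) * a * Real.cosh (b * x)
        - Real.cosh (a * x) * (Real.sinh (b * x) * b)) / (Real.cosh (b * x)) ^ 2) x := by
  have ha : HasDerivAt (fun K : ℝ => Real.cosh (a * K)) (Real.sinh (a * x) * a) x := by
    simpa using ((hasDerivAt_id x).const_mul a).cosh
  have hb : HasDerivAt (fun K : ℝ => Real.cosh (b * K)) (Real.sinh (b * x) * b) x := by
    simpa using ((hasDerivAt_id x).const_mul b).cosh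
  exact ha.div hb (ne_of_gt (Real.cosh_pos _))

/-- The normalized edge Boltzmann factor on the Nishimori line,
`u_k(K) = cosh((n+1-2k)K) / cosh((n+1)K)`. -/
noncomputable def uNL (n k : ℕ) (K : ℝ) : ℝ :=
  cosh (((n : ℝ) + 1 - 2 * k) * K) / cosh (((n : ℝ) + 1) * K)

/-- For every `n ≥ 1` and `k ∈ {1,…,n}`, the function `K ↦ u_k(K)` is strictly
decreasing on `[0,∞)`, satisfies `u_k(0) = 1`, and tends to `0` as `K → ∞`. -/
theorem uNL_strictAntiOn_and_limits (n : ℕ) (hn : 1 ≤ n) (k : ℕ) (hk1 : 1 ≤ k) (hkn : k ≤ n) :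
    StrictAntiOn (uNL n k) (Set.Ici 0) ∧ uNL n k 0 = 1 ∧
      Tendsto (uNL n k) atTop (nhds 0) := by
  set a : ℝ := (n : ℝ) + 1 - 2 * k with ha
  set b : ℝ := (n : ℝ) + 1 with hb
  have hk1' : (1 : ℝ) ≤ (k : ℝ) := by exact_mod_cast hk1
  have hkn' : (k : ℝ) ≤ (n : ℝ) := by exact_mod_cast hkn
  have hab : |a| < b := by
    rw [abs_lt]; constructor <;> [skip; skip] <;> simp only [ha, hb] <;> linarith
  have hb0 : 0 < b := lt_of_le_of_lt (abs_nonneg a) hab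
  have hu : uNL n k = fun K => Real.cosh (a * K) / Real.cosh (b * K) := rfl
  refine ⟨?_, ?_, ?_⟩
  · rw [hu]
    apply strictAntiOn_of_deriv_neg (convex_Ici 0)
    · apply Continuous.continuousOn
      exact (Real.continuous_cosh.comp (continuous_const.mul continuous_id)).div
        (Real.continuous_cosh.comp (continuous_const.mul continuous_id))
        (fun x => ne_of_gt (Real.cosh_pos _))
    · intro x hx
      rw [interior_Ici] at hx
      rw [(uNL_hasDerivAt a b x).deriv]
      apply div_neg_of_neg_of_pos
      · have := key_ineq a b x hab hx
        nlinarith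
      · positivity
  · simp [uNL]
  · rw [hu]
    have hg : Tendsto (fun K : ℝ => 2 * Real.exp ((|a| - b) * K)) atTop (nhds 0) := by
      have h1 : Tendsto (fun K : ℝ => (|a| - b) * K) atTop atBot :=
        tendsto_id.const_mul_atTop_of_neg (by linarith)
      simpa using (Real.tendsto_exp_atBot.comp h1).const_mul 2
    apply tendsto_of_tendsto_of_tendsto_of_le_of_le' tendsto_const_nhds hg
    · filter_upwards with K
      positivity
    · filter_upwards [eventually_ge_atTop (0 : ℝ)] with K hK
      have hnum : Real.cosh (a * K) ≤ Real.exp (|a| * K) := by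
        rw [Real.cosh_eq]
        have e1 : Real.exp (a * K) ≤ Real.exp (|a| * K) :=
          Real.exp_le_exp.2 (mul_le_mul_of_nonneg_right (le_abs_self a) hK)
        have e2 : Real.exp (-(a * K)) ≤ Real.exp (|a| * K) := by
          apply Real.exp_le_exp.2
          rw [← neg_mul]
          exact mul_le_mul_of_nonneg_right (by linarith [neg_abs_le a]) hK
        linarith
      have hden : Real.exp (b * K) / 2 ≤ Real.cosh (b * K) := by
        rw [Real.cosh_eq]
        have := Real.exp_pos (-(b * K))
        linarith
      have hden0 : 0 < Real.exp (b * K) / 2 := by positivity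
      calc Real.cosh (a * K) / Real.cosh (b * K)
          ≤ Real.exp (|a| * K) / (Real.exp (b * K) / 2) := by
            exact div_le_div₀ (Real.exp_pos _).le hnum hden0 hden
          _ = 2 * Real.exp ((|a| - b) * K) := by
            rw [sub_mul, Real.exp_sub]; ring
end

section
/- Let G = (V,E) be a finite simple connected graph with N vertices and at least one edge, and n ≥ 1 an integer. Define U(K) = Z̃_n(u_1(K),...,u_n(K)) for K ∈ [0,∞), where u_k(K) = cosh((n+1-2k)K)/cosh((n+1)K). Then U is continuous and strictly decreasing on [0,∞), U(0) = 2^{nN}, and U(K) → 2^n as K → ∞. -/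
open Finset Real Filter

/-- Number of replicas (out of `n`) in which the spins at `i` and `j` are antiparallel. -/
def antiCount {V : Type*} (n : ℕ) (S : V → Fin n → Bool) (i j : V) : ℕ :=
  (Finset.univ.filter fun a : Fin n => S i a ≠ S j a).card

theorem antiCount_symm {V : Type*} (n : ℕ) (S : V → Fin n → Bool) (i j : V) :
    antiCount n S i j = antiCount n S j i := by
  unfold antiCount
  congr 1
  apply Finset.filter_congr
  intro a _
  exact ne_comm

/-- The normalized replicated partition function
`Z̃_n(u) = Σ_S Π_{{i,j} ∈ E} u_{k(S,{i,j})}`, where the sum runs over all spin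
configurations `S : V → {-1,+1}^n`, `k(S,{i,j})` is the number of replicas in which
the spins at `i` and `j` are antiparallel, and `u : ℕ → ℝ` gives the normalized
edge Boltzmann factors (with the convention `u 0 = 1`). -/
noncomputable def Ztilde {V : Type*} [Fintype V] [DecidableEq V] (G : SimpleGraph V)
    [DecidableRel G.Adj] (n : ℕ) (u : ℕ → ℝ) : ℝ :=
  ∑ S : V → Fin n → Bool, ∏ e ∈ G.edgeFinset,
    Sym2.lift ⟨fun i j => u (antiCount n S i j),
      fun i j => congrArg u (antiCount_symm n S i j)⟩ e

/-- `U(K) = Z̃_n(u_1(K),…,u_n(K))` on the Nishimori line. -/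
noncomputable def Ufun {V : Type*} [Fintype V] [DecidableEq V] (G : SimpleGraph V)
    [DecidableRel G.Adj] (n : ℕ) (K : ℝ) : ℝ :=
  Ztilde G n (fun k => uNL n k K)


lemma cosh_mul_lt {a b x y : ℝ} (ha : 0 ≤ a) (hab : a < b) (hx : 0 ≤ x) (hxy : x < y) :
    cosh (a*y) * cosh (b*x) < cosh (a*x) * cosh (b*y) := by
  have hy : 0 ≤ y := hx.trans hxy.le
  have hb : 0 < b := ha.trans_lt hab
  have h1 : cosh (a*y + b*x) < cosh (a*x + b*y) := by
    rw [Real.cosh_lt_cosh, abs_of_nonneg (by positivity), abs_of_nonneg (by positivity)]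
    nlinarith
  have h2 : cosh (a*y - b*x) ≤ cosh (a*x - b*y) := by
    rw [Real.cosh_le_cosh]
    have hba : a * x ≤ b * y := by nlinarith
    rw [abs_sub_comm (a*x) (b*y),
      abs_of_nonneg (show (0:ℝ) ≤ b * y - a * x by linarith), abs_le]
    constructor <;> nlinarith
  nlinarith [Real.cosh_add (a*y) (b*x), Real.cosh_sub (a*y) (b*x),
    Real.cosh_add (a*x) (b*y), Real.cosh_sub (a*x) (b*y)]

lemma coshRatio_strictAntiOn {a b : ℝ} (hab : |a| < b) :
    StrictAntiOn (fun K => cosh (a*K) / cosh (b*K)) (Set.Ici 0) := by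
  intro x hx y hy hxy
  simp only [Set.mem_Ici] at hx hy
  have e : ∀ t : ℝ, 0 ≤ t → cosh (a*t) = cosh (|a| * t) := by
    intro t ht
    rw [← Real.cosh_abs (a*t), abs_mul, abs_of_nonneg ht]
  simp only
  rw [e x hx, e y hy, div_lt_div_iff₀ (cosh_pos _) (cosh_pos _)]
  exact cosh_mul_lt (abs_nonneg a) hab hx hxy

lemma coshRatio_tendsto {a b : ℝ} (hab : |a| < b) :
    Tendsto (fun K => cosh (a*K) / cosh (b*K)) atTop (nhds 0) := by
  have hb : 0 < b := (abs_nonneg a).trans_lt hab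
  have ha1 : a - b < 0 := by cases abs_lt.1 hab; linarith
  have ha2 : -a - b < 0 := by cases abs_lt.1 hab; linarith
  have hbound : ∀ K : ℝ, cosh (a*K) / cosh (b*K) ≤ exp ((a-b)*K) + exp ((-a-b)*K) := by
    intro K
    have h1 : cosh (a*K) = (exp (a*K) + exp (-(a*K))) / 2 := Real.cosh_eq _
    have h2 : exp (b*K) / 2 ≤ cosh (b*K) := by
      rw [Real.cosh_eq]
      have := Real.exp_pos (-(b*K))
      linarith
    have h3 : cosh (a*K) / cosh (b*K) ≤ ((exp (a*K) + exp (-(a*K))) / 2) / (exp (b*K) / 2) := by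
      rw [← h1]
      apply div_le_div_of_nonneg_left (cosh_pos _).le (by positivity) h2
    calc cosh (a*K) / cosh (b*K) ≤ ((exp (a*K) + exp (-(a*K))) / 2) / (exp (b*K) / 2) := h3
      _ = (exp (a*K) + exp (-(a*K))) / exp (b*K) := by
          rw [div_div_div_comm]
          norm_num
      _ = exp (a*K) / exp (b*K) + exp (-(a*K)) / exp (b*K) := by rw [add_div]
      _ = exp ((a-b)*K) + exp ((-a-b)*K) := by
          rw [← Real.exp_sub, ← Real.exp_sub]
          ring_nf
  have hlim : Tendsto (fun K : ℝ => exp ((a-b)*K) + exp ((-a-b)*K)) atTop (nhds 0) := by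
    have t1 : Tendsto (fun K : ℝ => (a-b)*K) atTop atBot :=
      Tendsto.const_mul_atTop_of_neg ha1 tendsto_id
    have t2 : Tendsto (fun K : ℝ => (-a-b)*K) atTop atBot :=
      Tendsto.const_mul_atTop_of_neg ha2 tendsto_id
    simpa using (Real.tendsto_exp_atBot.comp t1).add (Real.tendsto_exp_atBot.comp t2)
  exact squeeze_zero (fun K => (div_pos (cosh_pos _) (cosh_pos _)).le) hbound hlim

section uNLlemmas
open Real

lemma uNL_pos (n k : ℕ) (K : ℝ) : 0 < uNL n k K := div_pos (cosh_pos _) (cosh_pos _)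

lemma uNL_le_one {n k : ℕ} (hk : k ≤ n) (K : ℝ) : uNL n k K ≤ 1 := by
  rw [uNL, div_le_one (cosh_pos _), Real.cosh_le_cosh, abs_mul, abs_mul]
  apply mul_le_mul_of_nonneg_right _ (abs_nonneg K)
  rw [abs_of_nonneg (by positivity : (0:ℝ) ≤ (n:ℝ)+1), abs_le]
  have : (k:ℝ) ≤ n := Nat.cast_le.2 hk
  constructor <;> nlinarith [Nat.cast_nonneg (α := ℝ) k]

lemma uNL_zero_right (n k : ℕ) : uNL n k 0 = 1 := by
  simp [uNL]

lemma uNL_zero_left (n : ℕ) (K : ℝ) : uNL n 0 K = 1 := by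
  rw [uNL]
  norm_num
  exact (cosh_pos _).ne'

lemma uNL_strictAntiOn {n k : ℕ} (hk1 : 1 ≤ k) (hk2 : k ≤ n) :
    StrictAntiOn (uNL n k) (Set.Ici 0) := by
  have : uNL n k = fun K => cosh (((n:ℝ)+1-2*k)*K) / cosh (((n:ℝ)+1)*K) := rfl
  rw [this]
  apply coshRatio_strictAntiOn
  have h1 : (1:ℝ) ≤ k := by exact_mod_cast hk1
  have h2 : (k:ℝ) ≤ n := by exact_mod_cast hk2
  rw [abs_lt]
  constructor <;> nlinarith

lemma uNL_antitoneOn {n k : ℕ} (hk : k ≤ n) : AntitoneOn (uNL n k) (Set.Ici 0) := by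
  rcases Nat.eq_zero_or_pos k with h | h
  · subst h
    intro x _ y _ _
    rw [uNL_zero_left, uNL_zero_left]
  · exact (uNL_strictAntiOn h hk).antitoneOn

lemma uNL_tendsto {n k : ℕ} (hk1 : 1 ≤ k) (hk2 : k ≤ n) :
    Tendsto (uNL n k) atTop (nhds 0) := by
  have : uNL n k = fun K => cosh (((n:ℝ)+1-2*k)*K) / cosh (((n:ℝ)+1)*K) := rfl
  rw [this]
  apply coshRatio_tendsto
  have h1 : (1:ℝ) ≤ k := by exact_mod_cast hk1
  have h2 : (k:ℝ) ≤ n := by exact_mod_cast hk2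
  rw [abs_lt]
  constructor <;> nlinarith

lemma uNL_continuous (n k : ℕ) : Continuous (uNL n k) := by
  apply Continuous.div
  · exact Real.continuous_cosh.comp (continuous_const.mul continuous_id)
  · exact Real.continuous_cosh.comp (continuous_const.mul continuous_id)
  · intro K; exact (cosh_pos _).ne'

end uNLlemmas

section fSlemmas
variable {V : Type*} [Fintype V] [DecidableEq V] (G : SimpleGraph V) [DecidableRel G.Adj] (n : ℕ)

/-- The Boltzmann weight of a single configuration. -/
noncomputable def fS (S : V → Fin n → Bool) (K : ℝ) : ℝ :=
  ∏ e ∈ G.edgeFinset,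
    Sym2.lift ⟨fun i j => uNL n (antiCount n S i j) K,
      fun i j => congrArg (fun m => uNL n m K) (antiCount_symm n S i j)⟩ e

lemma Ufun_eq (K : ℝ) : Ufun G n K = ∑ S : V → Fin n → Bool, fS G n S K := rfl

lemma antiCount_le (S : V → Fin n → Bool) (i j : V) : antiCount n S i j ≤ n := by
  unfold antiCount
  simpa using Finset.card_filter_le Finset.univ (fun a : Fin n => S i a ≠ S j a)

lemma antiCount_eq_zero (S : V → Fin n → Bool) {i j : V} (h : S i = S j) :
    antiCount n S i j = 0 := by
  simp [antiCount, h]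

lemma antiCount_pos (S : V → Fin n → Bool) {i j : V} (h : S i ≠ S j) :
    1 ≤ antiCount n S i j := by
  obtain ⟨a, ha⟩ := Function.ne_iff.1 h
  rw [Nat.succ_le_iff]
  apply Finset.card_pos.2
  exact ⟨a, by simpa using ha⟩

lemma fS_pos (S : V → Fin n → Bool) (K : ℝ) : 0 < fS G n S K := by
  apply Finset.prod_pos
  intro e
  induction e using Sym2.ind with
  | _ i j =>
    intro _
    simpa only [Sym2.lift_mk] using uNL_pos n _ K

lemma fS_le_one (S : V → Fin n → Bool) (K : ℝ) : fS G n S K ≤ 1 := by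
  apply Finset.prod_le_one
  · intro e
    induction e using Sym2.ind with
    | _ i j => intro _; simpa only [Sym2.lift_mk] using (uNL_pos n _ K).le
  · intro e
    induction e using Sym2.ind with
    | _ i j =>
      intro _
      simpa only [Sym2.lift_mk] using uNL_le_one (antiCount_le n S i j) K

lemma fS_zero (S : V → Fin n → Bool) : fS G n S 0 = 1 := by
  apply Finset.prod_eq_one
  intro e
  induction e using Sym2.ind with
  | _ i j =>
    intro _
    simpa only [Sym2.lift_mk] using uNL_zero_right n (antiCount n S i j)

lemma fS_antitoneOn (S : V → Fin n → Bool) : AntitoneOn (fS G n S) (Set.Ici 0) := by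
  intro x hx y hy hxy
  apply Finset.prod_le_prod
  · intro e
    induction e using Sym2.ind with
    | _ i j => intro _; simpa only [Sym2.lift_mk] using (uNL_pos n _ y).le
  · intro e
    induction e using Sym2.ind with
    | _ i j =>
      intro _
      simpa only [Sym2.lift_mk] using uNL_antitoneOn (antiCount_le n S i j) hx hy hxy

lemma fS_const (S : V → Fin n → Bool) (hS : ∀ i j, G.Adj i j → S i = S j) (K : ℝ) :
    fS G n S K = 1 := by
  apply Finset.prod_eq_one
  intro e
  induction e using Sym2.ind with
  | _ i j =>
    intro he
    rw [SimpleGraph.mem_edgeFinset, SimpleGraph.mem_edgeSet] at he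
    simp only [Sym2.lift_mk, antiCount_eq_zero n S (hS i j he)]
    exact uNL_zero_left n K

lemma fS_strictAntiOn (S : V → Fin n → Bool)
    (hS : ∃ i j, G.Adj i j ∧ S i ≠ S j) : StrictAntiOn (fS G n S) (Set.Ici 0) := by
  obtain ⟨i, j, hadj, hne⟩ := hS
  have he₀ : s(i, j) ∈ G.edgeFinset := by
    rw [SimpleGraph.mem_edgeFinset, SimpleGraph.mem_edgeSet]; exact hadj
  intro x hx y hy hxy
  rw [fS, fS, ← Finset.mul_prod_erase _ _ he₀, ← Finset.mul_prod_erase _ _ he₀]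
  simp only [Sym2.lift_mk]
  set k₀ := antiCount n S i j with hk₀
  have hk1 : 1 ≤ k₀ := antiCount_pos n S hne
  have hk2 : k₀ ≤ n := antiCount_le n S i j
  have hrest_le : (∏ e ∈ G.edgeFinset.erase s(i,j),
      Sym2.lift ⟨fun i j => uNL n (antiCount n S i j) y,
        fun i j => congrArg (fun m => uNL n m y) (antiCount_symm n S i j)⟩ e)
      ≤ ∏ e ∈ G.edgeFinset.erase s(i,j),
      Sym2.lift ⟨fun i j => uNL n (antiCount n S i j) x,
        fun i j => congrArg (fun m => uNL n m x) (antiCount_symm n S i j)⟩ e := by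
    apply Finset.prod_le_prod
    · intro e
      induction e using Sym2.ind with
      | _ a b => intro _; simpa only [Sym2.lift_mk] using (uNL_pos n _ y).le
    · intro e
      induction e using Sym2.ind with
      | _ a b =>
        intro _
        simpa only [Sym2.lift_mk] using uNL_antitoneOn (antiCount_le n S a b) hx hy hxy.le
  have hrest_pos : (0:ℝ) < ∏ e ∈ G.edgeFinset.erase s(i,j),
      Sym2.lift ⟨fun i j => uNL n (antiCount n S i j) x,
        fun i j => congrArg (fun m => uNL n m x) (antiCount_symm n S i j)⟩ e := by
    apply Finset.prod_pos
    intro e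
    induction e using Sym2.ind with
    | _ a b => intro _; simpa only [Sym2.lift_mk] using uNL_pos n _ x
  have hu : uNL n k₀ y < uNL n k₀ x := uNL_strictAntiOn hk1 hk2 hx hy hxy
  calc uNL n k₀ y * _ ≤ uNL n k₀ y * _ := by
        exact mul_le_mul_of_nonneg_left hrest_le (uNL_pos n k₀ y).le
    _ < uNL n k₀ x * _ := mul_lt_mul_of_pos_right hu hrest_pos

lemma fS_tendsto (S : V → Fin n → Bool)
    (hS : ∃ i j, G.Adj i j ∧ S i ≠ S j) : Tendsto (fS G n S) atTop (nhds 0) := by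
  obtain ⟨i, j, hadj, hne⟩ := hS
  have he₀ : s(i, j) ∈ G.edgeFinset := by
    rw [SimpleGraph.mem_edgeFinset, SimpleGraph.mem_edgeSet]; exact hadj
  set k₀ := antiCount n S i j with hk₀
  have hk1 : 1 ≤ k₀ := antiCount_pos n S hne
  have hk2 : k₀ ≤ n := antiCount_le n S i j
  have hbound : ∀ K : ℝ, fS G n S K ≤ uNL n k₀ K := by
    intro K
    rw [fS, ← Finset.mul_prod_erase _ _ he₀]
    simp only [Sym2.lift_mk]
    have hrest_le_one : (∏ e ∈ G.edgeFinset.erase s(i,j),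
        Sym2.lift ⟨fun i j => uNL n (antiCount n S i j) K,
          fun i j => congrArg (fun m => uNL n m K) (antiCount_symm n S i j)⟩ e) ≤ 1 := by
      apply Finset.prod_le_one
      · intro e
        induction e using Sym2.ind with
        | _ a b => intro _; simpa only [Sym2.lift_mk] using (uNL_pos n _ K).le
      · intro e
        induction e using Sym2.ind with
        | _ a b =>
          intro _
          simpa only [Sym2.lift_mk] using uNL_le_one (antiCount_le n S a b) K
    calc uNL n k₀ K * _ ≤ uNL n k₀ K * 1 :=
          mul_le_mul_of_nonneg_left hrest_le_one (uNL_pos n k₀ K).le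
      _ = uNL n k₀ K := mul_one _
  exact squeeze_zero (fun K => (fS_pos G n S K).le) hbound (uNL_tendsto hk1 hk2)

lemma fS_continuous (S : V → Fin n → Bool) : Continuous (fS G n S) := by
  apply continuous_finset_prod
  intro e
  induction e using Sym2.ind with
  | _ i j =>
    intro _
    simp only [Sym2.lift_mk]
    exact uNL_continuous n _

end fSlemmas

lemma const_on_walk {V : Type*} {G : SimpleGraph V} {n : ℕ} (S : V → Fin n → Bool)
    (hS : ∀ i j, G.Adj i j → S i = S j) {u v : V} (w : G.Walk u v) : S u = S v := by
  induction w with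
  | nil => rfl
  | cons h _ ih => exact (hS _ _ h).trans ih


/-- For a finite connected graph with `N` vertices and at least one edge and `n ≥ 1`,
the function `U(K) = Z̃_n(u_1(K),…,u_n(K))` is continuous and strictly decreasing on
`[0,∞)`, `U(0) = 2^{nN}`, and `U(K) → 2^n` as `K → ∞`. -/
theorem Ufun_props {V : Type*} [Fintype V] [DecidableEq V] (G : SimpleGraph V)
    [DecidableRel G.Adj] (hG : G.Connected) (hE : G.edgeFinset.Nonempty)
    (n : ℕ) (hn : 1 ≤ n) :
    ContinuousOn (Ufun G n) (Set.Ici 0) ∧ StrictAntiOn (Ufun G n) (Set.Ici 0) ∧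
      Ufun G n 0 = 2 ^ (n * Fintype.card V) ∧
      Tendsto (Ufun G n) atTop (nhds (2 ^ n)) := by
  
  classical
  have hUeq : Ufun G n = fun K => ∑ S : V → Fin n → Bool, fS G n S K :=
    funext (Ufun_eq G n)
  -- the count of constant configurations
  obtain ⟨v₀⟩ := hG.nonempty
  set C : Finset (V → Fin n → Bool) :=
    Finset.univ.filter (fun S => ∀ i j, G.Adj i j → S i = S j) with hC
  have hCc : C.card = 2 ^ n := by
    have : C.card = (Finset.univ : Finset (Fin n → Bool)).card := by
      apply Finset.card_bij' (fun S _ => S v₀) (fun c _ => fun _ => c)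
      · intro a _; exact Finset.mem_univ _
      · intro c _
        simp only [hC, Finset.mem_filter, Finset.mem_univ, true_and]
        intro i j _; trivial
      · intro S hS
        simp only [hC, Finset.mem_filter, Finset.mem_univ, true_and] at hS
        funext v
        exact (const_on_walk S hS ((hG.preconnected v v₀).some)).symm
      · intro c _; rfl
    rw [this, Finset.card_univ]
    simp
  refine ⟨?_, ?_, ?_, ?_⟩
  · -- continuity
    rw [hUeq]
    exact (continuous_finset_sum _ (fun S _ => fS_continuous G n S)).continuousOn
  · -- strict antitonicity
    intro x hx y hy hxy
    rw [hUeq]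
    apply Finset.sum_lt_sum
    · intro S _
      exact fS_antitoneOn G n S hx hy hxy.le
    · obtain ⟨e, he⟩ := hE
      induction e using Sym2.ind with
      | _ i j =>
        rw [SimpleGraph.mem_edgeFinset, SimpleGraph.mem_edgeSet] at he
        have hij : i ≠ j := G.ne_of_adj he
        refine ⟨fun v _ => decide (v = i), Finset.mem_univ _, ?_⟩
        have hne : (fun _ : Fin n => decide (i = i)) ≠ (fun _ : Fin n => decide (j = i)) := by
          intro h
          have := congrFun h ⟨0, hn⟩
          simp only [decide_eq_decide] at this
          exact hij (this.mp trivial).symm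
        exact fS_strictAntiOn G n _ ⟨i, j, he, hne⟩ hx hy hxy
  · -- value at 0
    rw [hUeq]
    simp only [fS_zero, Finset.sum_const, Finset.card_univ, nsmul_eq_mul, mul_one]
    rw [Fintype.card_fun, Fintype.card_fun]
    push_cast
    rw [Fintype.card_bool, Fintype.card_fin, ← pow_mul]
    norm_num
  · -- limit at infinity
    rw [hUeq]
    have hlim : Tendsto (fun K => ∑ S : V → Fin n → Bool, fS G n S K) atTop
        (nhds (∑ S : V → Fin n → Bool,
          if (∀ i j, G.Adj i j → S i = S j) then (1:ℝ) else 0)) := by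
      apply tendsto_finset_sum
      intro S _
      by_cases hS : ∀ i j, G.Adj i j → S i = S j
      · rw [if_pos hS]
        exact Tendsto.congr (fun K => (fS_const G n S hS K).symm) tendsto_const_nhds
      · rw [if_neg hS]
        push_neg at hS
        obtain ⟨i, j, hadj, hne⟩ := hS
        exact fS_tendsto G n S ⟨i, j, hadj, hne⟩
    have hsum : (∑ S : V → Fin n → Bool,
        if (∀ i j, G.Adj i j → S i = S j) then (1:ℝ) else 0) = 2 ^ n := by
      rw [Finset.sum_boole]
      rw [show ({S ∈ Finset.univ | ∀ i j, G.Adj i j → S i = S j} : Finset _) = C from rfl]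
      rw [hCc]
      push_cast
      ring
    rwa [hsum] at hlim
end

section
/- Let G = (V,E) be a finite simple connected graph with N vertices and at least one edge, and n ≥ 1 an integer. Define V(K) = Z̃_n(u_1^*(K),...,u_n^*(K)) for K ∈ [0,∞), where u_k^*(K) = (tanh K)^{k+1} for k odd and (tanh K)^k for k even. Then V is continuous and strictly increasing on [0,∞), V(0) = 2^n, and V(K) → 2^{nN} as K → ∞. -/
open Finset Real Filter

/-- The normalized dual edge Boltzmann factor on the Nishimori line:
`u_k^*(K) = (tanh K)^{k+1}` for `k` odd and `(tanh K)^k` for `k` even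
(note `u_0^*(K) = 1`). -/
noncomputable def uStarNL (k : ℕ) (K : ℝ) : ℝ :=
  if Odd k then (tanh K) ^ (k + 1) else (tanh K) ^ k

/-- `V(K) = Z̃_n(u_1^*(K),…,u_n^*(K))` on the Nishimori line. -/
noncomputable def Vfun {V : Type*} [Fintype V] [DecidableEq V] (G : SimpleGraph V)
    [DecidableRel G.Adj] (n : ℕ) (K : ℝ) : ℝ :=
  Ztilde G n (fun k => uStarNL k K)


lemma tanh_formula (x : ℝ) : Real.tanh x = 1 - 2 / (Real.exp (2*x) + 1) := by
  rw [Real.tanh_eq_sinh_div_cosh, Real.sinh_eq, Real.cosh_eq]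
  have h1 : (0:ℝ) < Real.exp x := Real.exp_pos x
  have h2 : (0:ℝ) < Real.exp (-x) := Real.exp_pos _
  have h3 : Real.exp (2*x) = Real.exp x * Real.exp x := by rw [← Real.exp_add]; ring_nf
  have h4 : Real.exp x * Real.exp (-x) = 1 := by rw [← Real.exp_add]; simp
  have h5 : (0:ℝ) < Real.exp (2*x) + 1 := by positivity
  rw [h3]
  field_simp
  nlinarith [h4]

lemma tanh_sm : StrictMono Real.tanh := by
  intro x y h
  rw [tanh_formula, tanh_formula]
  have he : Real.exp (2*x) < Real.exp (2*y) := Real.exp_lt_exp.2 (by linarith)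
  have hx : (0:ℝ) < Real.exp (2*x) + 1 := by positivity
  have := div_lt_div_of_pos_left (two_pos (α := ℝ)) hx (by linarith : Real.exp (2*x) + 1 < Real.exp (2*y) + 1)
  linarith

lemma continuous_tanh' : Continuous Real.tanh := by
  have : Real.tanh = fun x => Real.sinh x / Real.cosh x := funext fun x => Real.tanh_eq_sinh_div_cosh x
  rw [this]
  exact Real.continuous_sinh.div Real.continuous_cosh fun x => (Real.cosh_pos x).ne'

lemma tanh_lim : Tendsto Real.tanh atTop (nhds 1) := by
  have h : Tendsto (fun x : ℝ => Real.exp (2*x) + 1) atTop atTop :=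
    tendsto_atTop_add_const_right _ 1
      (Real.tendsto_exp_atTop.comp (Tendsto.const_mul_atTop two_pos tendsto_id))
  have h2 : Tendsto (fun x : ℝ => 2 / (Real.exp (2*x) + 1)) atTop (nhds 0) :=
    Tendsto.div_atTop tendsto_const_nhds h
  have h3 : Tendsto (fun x : ℝ => 1 - 2 / (Real.exp (2*x) + 1)) atTop (nhds (1 - 0)) :=
    tendsto_const_nhds.sub h2
  rw [sub_zero] at h3
  exact h3.congr fun x => (tanh_formula x).symm


def expFn (k : ℕ) : ℕ := if Odd k then k + 1 else k

lemma expFn_ge (k : ℕ) : k ≤ expFn k := by unfold expFn; split_ifs <;> omega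

lemma expFn_eq_zero_iff (k : ℕ) : expFn k = 0 ↔ k = 0 := by
  unfold expFn; split_ifs with h
  · obtain ⟨m, rfl⟩ := h
    simp
  · rfl

lemma uStar_eq (k : ℕ) (K : ℝ) : uStarNL k K = tanh K ^ expFn k := by
  unfold uStarNL expFn; split_ifs <;> rfl

def mWt {V : Type*} [Fintype V] [DecidableEq V] (G : SimpleGraph V)
    [DecidableRel G.Adj] (n : ℕ) (S : V → Fin n → Bool) : ℕ :=
  ∑ e ∈ G.edgeFinset,
    Sym2.lift ⟨fun i j => expFn (antiCount n S i j),
      fun i j => congrArg expFn (antiCount_symm n S i j)⟩ e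

lemma Vfun_eq {V : Type*} [Fintype V] [DecidableEq V] (G : SimpleGraph V)
    [DecidableRel G.Adj] (n : ℕ) (K : ℝ) :
    Vfun G n K = ∑ S : V → Fin n → Bool, tanh K ^ mWt G n S := by
  unfold Vfun Ztilde mWt
  refine Finset.sum_congr rfl fun S _ => ?_
  rw [← Finset.prod_pow_eq_pow_sum]
  refine Finset.prod_congr rfl fun e _ => ?_
  induction e using Sym2.ind with
  | _ i j => simp [uStar_eq]

lemma mWt_const {V : Type*} [Fintype V] [DecidableEq V] (G : SimpleGraph V)
    [DecidableRel G.Adj] (n : ℕ) (c : Fin n → Bool) :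
    mWt G n (fun _ => c) = 0 := by
  unfold mWt
  refine Finset.sum_eq_zero fun e _ => ?_
  induction e using Sym2.ind with
  | _ i j => simp [antiCount, expFn]

lemma mWt_zero_const {V : Type*} [Fintype V] [DecidableEq V] {G : SimpleGraph V}
    [DecidableRel G.Adj] (hG : G.Connected) {n : ℕ} {S : V → Fin n → Bool}
    (h : mWt G n S = 0) : ∃ c, S = fun _ => c := by
  have hadj : ∀ i j : V, G.Adj i j → S i = S j := by
    intro i j hij
    have hmem : s(i, j) ∈ G.edgeFinset := by
      rw [SimpleGraph.mem_edgeFinset]; exact hij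
    have h0 := (Finset.sum_eq_zero_iff.mp h) _ hmem
    rw [Sym2.lift_mk] at h0
    have hc : antiCount n S i j = 0 := (expFn_eq_zero_iff _).mp h0
    funext a
    by_contra hne
    have : a ∈ Finset.univ.filter fun a : Fin n => S i a ≠ S j a := by
      simp [hne]
    have := Finset.card_pos.mpr ⟨a, this⟩
    unfold antiCount at hc
    omega
  have hconst : ∀ v w : V, S v = S w := by
    intro v w
    obtain ⟨p⟩ := hG v w
    induction p with
    | nil => rfl
    | cons h' p ih => exact (hadj _ _ h').trans ih
  obtain ⟨v₀⟩ := hG.nonempty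
  exact ⟨S v₀, funext fun v => hconst v v₀⟩

lemma exists_mWt_pos {V : Type*} [Fintype V] [DecidableEq V] {G : SimpleGraph V}
    [DecidableRel G.Adj] (hE : G.edgeFinset.Nonempty) {n : ℕ} (hn : 1 ≤ n) :
    ∃ S : V → Fin n → Bool, mWt G n S ≠ 0 := by
  obtain ⟨e, he⟩ := hE
  induction e using Sym2.ind with
  | _ i j =>
    have hij : G.Adj i j := by rwa [SimpleGraph.mem_edgeFinset] at he
    refine ⟨fun v _ => decide (v = i), fun h0 => ?_⟩
    have h1 := (Finset.sum_eq_zero_iff.mp h0) _ he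
    rw [Sym2.lift_mk] at h1
    have hc := (expFn_eq_zero_iff _).mp h1
    have : antiCount n (fun v _ => decide (v = i)) i j = n := by
      unfold antiCount
      rw [Finset.filter_true_of_mem, Finset.card_univ, Fintype.card_fin]
      intro a _
      simp [hij.ne']
    omega


/-- For a finite connected graph with `N` vertices and at least one edge and `n ≥ 1`,
the function `V(K) = Z̃_n(u_1^*(K),…,u_n^*(K))` is continuous and strictly increasing
on `[0,∞)`, `V(0) = 2^n`, and `V(K) → 2^{nN}` as `K → ∞`. -/
theorem Vfun_props {V : Type*} [Fintype V] [DecidableEq V] (G : SimpleGraph V)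
    [DecidableRel G.Adj] (hG : G.Connected) (hE : G.edgeFinset.Nonempty)
    (n : ℕ) (hn : 1 ≤ n) :
    ContinuousOn (Vfun G n) (Set.Ici 0) ∧ StrictMonoOn (Vfun G n) (Set.Ici 0) ∧
      Vfun G n 0 = 2 ^ n ∧
      Tendsto (Vfun G n) atTop (nhds (2 ^ (n * Fintype.card V))) := by
  set P : ℝ → ℝ := fun t => ∑ S : V → Fin n → Bool, t ^ mWt G n S with hPdef
  have hVP : Vfun G n = fun K => P (tanh K) := funext fun K => Vfun_eq G n K
  have hP : Continuous P := continuous_finset_sum _ fun S _ => continuous_pow _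
  refine ⟨?_, ?_, ?_, ?_⟩
  · rw [hVP]
    exact (hP.comp continuous_tanh').continuousOn
  · intro x hx y hy hxy
    rw [hVP]
    have h0x : 0 ≤ tanh x := by
      have := tanh_sm.monotone (Set.mem_Ici.mp hx)
      rwa [Real.tanh_zero] at this
    have hlt : tanh x < tanh y := tanh_sm hxy
    obtain ⟨S₀, hS₀⟩ := exists_mWt_pos hE hn
    exact Finset.sum_lt_sum (fun S _ => pow_le_pow_left₀ h0x hlt.le _)
      ⟨S₀, Finset.mem_univ _, pow_lt_pow_left₀ hlt h0x hS₀⟩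
  · rw [hVP]
    simp only [Real.tanh_zero, hPdef]
    have h1 : ∀ S : V → Fin n → Bool,
        (0:ℝ) ^ mWt G n S = if mWt G n S = 0 then 1 else 0 := by
      intro S
      split_ifs with h
      · rw [h, pow_zero]
      · exact zero_pow h
    rw [Finset.sum_congr rfl fun S _ => h1 S, Finset.sum_boole]
    have h2 : Finset.univ.filter (fun S : V → Fin n → Bool => mWt G n S = 0) =
        Finset.image (fun c : Fin n → Bool => fun _ : V => c) Finset.univ := by
      ext S
      simp only [Finset.mem_filter, Finset.mem_univ, true_and, Finset.mem_image]
      constructor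
      · intro h
        obtain ⟨c, hc⟩ := mWt_zero_const hG h
        exact ⟨c, hc.symm⟩
      · rintro ⟨c, rfl⟩
        exact mWt_const G n c
    obtain ⟨v₀⟩ := hG.nonempty
    rw [h2, Finset.card_image_of_injective _ (fun c c' h => congrFun h v₀),
      Finset.card_univ]
    simp
  · rw [hVP]
    have hcomp : Tendsto (fun K => P (tanh K)) atTop (nhds (P 1)) :=
      (hP.tendsto 1).comp tanh_lim
    have hP1 : P 1 = 2 ^ (n * Fintype.card V) := by
      simp only [hPdef, one_pow, Finset.sum_const, Finset.card_univ, nsmul_eq_mul, mul_one]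
      rw [Fintype.card_fun, Fintype.card_fun, Fintype.card_fin, Fintype.card_bool, ← pow_mul]
      norm_cast
    rwa [hP1] at hcomp
end
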